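/- Let $f:\mathbb{R}^d \to \mathbb{R}$ be $2$-smooth with constant $\bar L$, and suppose $\max_{x \in \Theta} \|\nabla f(x)\| \le G$ on a set $\Theta$. Let $K:[-1,1]\to\mathbb{R}$ with $\kappa = \int K^2(u)du < \infty$, let $r \sim U[-1,1]$, and let $\xi_1,\dots,\xi_d,\xi'_1,\dots,\xi'_d$ be random variables independent of $r$ with second moments bounded by $\sigma^2$. Let $x$ be a random variable with values in $\Theta$, independent of $r$. Define $g_j = \frac{1}{2h}(f(x + hre_j) + \xi_j - f(x - hre_j) - \xi'_j)K(r)$. Then $\mathbb{E}\|g\|^2 \le \frac{3d\kappa}{2}\Big(\frac{\sigma^2}{h^2} + \frac{3\bar L^2}{4}h^2\Big) + 9G^2\kappa$. -/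

import Mathlib

/-!
Along a coordinate direction `e_j`, the central difference `f (x + t e_j) - f (x - t e_j)` equals
`2 t ∂ⱼf(x)` up to `2 L̄ t²`. Splitting the square of the `j`-th coordinate of `2h g` into gradient,
curvature and noise parts by a weighted Cauchy–Schwarz inequality gives, whenever `|r| ≤ 1`,
`‖g‖² ≤ (9G²/2 + 9dL̄²h²/4 + 3/(2h²) ∑ⱼ (ξⱼ² + ξ'ⱼ²)) K(r)²`.
The factor in parentheses is a function of `(x, ξ, ξ')`, hence independent of `r`, so the
expectation of the right-hand side factors, with `𝔼 K(r)² = κ/2`.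
-/

open MeasureTheory ProbabilityTheory InnerProductSpace Finset

theorem abs_sub_sub_two_inner_gradient_le {E : Type*} [NormedAddCommGroup E]
    [InnerProductSpace ℝ E] [CompleteSpace E] {f : E → ℝ} {L : ℝ} (hf : Differentiable ℝ f)
    (hlip : ∀ x x' : E, ‖gradient f x - gradient f x'‖ ≤ L * ‖x - x'‖) (x u : E) :
    |f (x + u) - f (x - u) - 2 * ⟪gradient f x, u⟫_ℝ| ≤ 2 * L * ‖u‖ ^ 2 := by
  rcases eq_or_ne u 0 with rfl | hu
  · simp
  have hL : 0 ≤ L := by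
    have := hlip (x + u) x
    rw [add_sub_cancel_left] at this
    exact nonneg_of_mul_nonneg_left ((norm_nonneg _).trans this) (norm_pos_iff.mpr hu)
  -- Mean value inequality for `f - ⟪∇f x, ·⟫`, whose derivative at `z` is dual to `∇f z - ∇f x`.
  have hderiv : ∀ z, HasFDerivAt (fun z => f z - ⟪gradient f x, z⟫_ℝ)
      (toDual ℝ E (gradient f z - gradient f x)) z := fun z => by
    rw [map_sub]
    exact (hf z).hasGradientAt.hasFDerivAt.sub (toDual ℝ E (gradient f x)).hasFDerivAt
  have hbound : ∀ z ∈ Metric.closedBall x ‖u‖,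
      ‖toDual ℝ E (gradient f z - gradient f x)‖ ≤ L * ‖u‖ := fun z hz => by
    rw [LinearIsometryEquiv.norm_map]
    exact (hlip z x).trans (mul_le_mul_of_nonneg_left (mem_closedBall_iff_norm.mp hz) hL)
  have hmvt := (convex_closedBall x ‖u‖).norm_image_sub_le_of_norm_hasFDerivWithin_le
    (fun z _ => (hderiv z).hasFDerivWithinAt) hbound
    (by simp : x - u ∈ Metric.closedBall x ‖u‖)
    (by simp : x + u ∈ Metric.closedBall x ‖u‖)
  rw [Real.norm_eq_abs, (by abel : x + u - (x - u) = u + u), ← two_smul ℝ u, norm_smul,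
    Real.norm_two] at hmvt
  calc _ = |f (x + u) - ⟪gradient f x, x + u⟫_ℝ - (f (x - u) - ⟪gradient f x, x - u⟫_ℝ)| := by
        rw [inner_add_right, inner_sub_right]; ring_nf
    _ ≤ L * ‖u‖ * (2 * ‖u‖) := hmvt
    _ = 2 * L * ‖u‖ ^ 2 := by ring

/- Cauchy–Schwarz with weights `2/9, 4/9, 1/3`, chosen so that the gradient, curvature and noise
terms fit the constants of the second-moment bound. -/
theorem add_add_sq_le (a b c : ℝ) :
    (a + b + c) ^ 2 ≤ 9 / 2 * a ^ 2 + 9 / 4 * b ^ 2 + 3 * c ^ 2 := by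
  nlinarith [sq_nonneg (b - 2 * a), sq_nonneg (2 * c - 3 * a), sq_nonneg (3 * b - 4 * c)]

theorem sq_centralDifference_mul_le {h t v p m L c c' k : ℝ} (hh : 0 < h) (ht : |t| ≤ h)
    (hpm : |p - m - 2 * t * v| ≤ 2 * L * t ^ 2) :
    (1 / (2 * h) * ((p + c) - (m + c')) * k) ^ 2
      ≤ (9 / 2 * v ^ 2 + 9 / 4 * L ^ 2 * h ^ 2 + 3 / (2 * h ^ 2) * (c ^ 2 + c' ^ 2)) * k ^ 2 := by
  have ht2 : t ^ 2 ≤ h ^ 2 := sq_le_sq' (abs_le.mp ht).1 (abs_le.mp ht).2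
  have hrem : (p - m - 2 * t * v) ^ 2 ≤ 4 * L ^ 2 * h ^ 4 := by
    calc (p - m - 2 * t * v) ^ 2 ≤ (2 * L * t ^ 2) ^ 2 :=
          sq_le_sq' (abs_le.mp hpm).1 (abs_le.mp hpm).2
      _ = 4 * L ^ 2 * (t ^ 2) ^ 2 := by ring
      _ ≤ 4 * L ^ 2 * (h ^ 2) ^ 2 := by gcongr
      _ = 4 * L ^ 2 * h ^ 4 := by ring
  have hsplit := add_add_sq_le (2 * t * v) (p - m - 2 * t * v) (c - c')
  have hnum : ((p + c) - (m + c')) ^ 2 ≤ 4 * h ^ 2 *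
      (9 / 2 * v ^ 2 + 9 / 4 * L ^ 2 * h ^ 2 + 3 / (2 * h ^ 2) * (c ^ 2 + c' ^ 2)) := by
    have hscale : 4 * h ^ 2 * (3 / (2 * h ^ 2)) = 6 := by field_simp; norm_num
    nlinarith [mul_le_mul_of_nonneg_right ht2 (sq_nonneg v), sq_nonneg (c + c')]
  calc (1 / (2 * h) * ((p + c) - (m + c')) * k) ^ 2
      = ((p + c) - (m + c')) ^ 2 / (4 * h ^ 2) * k ^ 2 := by field_simp; ring
    _ ≤ _ := by
        gcongr
        rwa [div_le_iff₀' (by positivity)]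

theorem sq_norm_le_of_centralDifference {d : ℕ} {f : EuclideanSpace ℝ (Fin d) → ℝ}
    {L G h ρ k : ℝ} (hf : Differentiable ℝ f)
    (hlip : ∀ x x', ‖gradient f x - gradient f x'‖ ≤ L * ‖x - x'‖)
    {x : EuclideanSpace ℝ (Fin d)} (hG : ‖gradient f x‖ ≤ G) (hh : 0 < h) (hρ : |ρ| ≤ 1)
    (c c' : Fin d → ℝ) {v : EuclideanSpace ℝ (Fin d)}
    (hv : ∀ j, v j = 1 / (2 * h) * ((f (x + (h * ρ) • EuclideanSpace.single j 1) + c j)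
        - (f (x - (h * ρ) • EuclideanSpace.single j 1) + c' j)) * k) :
    ‖v‖ ^ 2 ≤ (9 / 2 * G ^ 2 + 9 / 4 * d * L ^ 2 * h ^ 2
      + 3 / (2 * h ^ 2) * ∑ j, (c j ^ 2 + c' j ^ 2)) * k ^ 2 := by
  have hcoord : ∀ j, v j ^ 2 ≤ (9 / 2 * gradient f x j ^ 2 + 9 / 4 * L ^ 2 * h ^ 2
      + 3 / (2 * h ^ 2) * (c j ^ 2 + c' j ^ 2)) * k ^ 2 := fun j => by
    have htaylor := abs_sub_sub_two_inner_gradient_le hf hlip x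
      ((h * ρ) • EuclideanSpace.single j (1 : ℝ))
    rw [real_inner_smul_right, EuclideanSpace.inner_single_right, conj_trivial, one_mul,
      norm_smul, PiLp.norm_single, norm_one, mul_one, Real.norm_eq_abs, sq_abs,
      ← mul_assoc] at htaylor
    rw [hv j]
    refine sq_centralDifference_mul_le hh ?_ htaylor
    rw [abs_mul, abs_of_pos hh]
    exact mul_le_of_le_one_right hh.le hρ
  have hgrad : ∑ j, gradient f x j ^ 2 ≤ G ^ 2 := by
    rw [← EuclideanSpace.real_norm_sq_eq]
    exact pow_le_pow_left₀ (norm_nonneg _) hG 2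
  calc ‖v‖ ^ 2 = ∑ j, v j ^ 2 := EuclideanSpace.real_norm_sq_eq v
    _ ≤ ∑ j, (9 / 2 * gradient f x j ^ 2 + 9 / 4 * L ^ 2 * h ^ 2
          + 3 / (2 * h ^ 2) * (c j ^ 2 + c' j ^ 2)) * k ^ 2 := sum_le_sum fun j _ => hcoord j
    _ = (9 / 2 * ∑ j, gradient f x j ^ 2 + 9 / 4 * d * L ^ 2 * h ^ 2
          + 3 / (2 * h ^ 2) * ∑ j, (c j ^ 2 + c' j ^ 2)) * k ^ 2 := by
        simp only [← sum_mul, sum_add_distrib, ← mul_sum, sum_const, card_univ, Fintype.card_fin,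
          nsmul_eq_mul]
        ring
    _ ≤ _ := by gcongr

namespace MeasureTheory.pdf.IsUniform

variable {Ω E : Type*} [MeasurableSpace Ω] [MeasurableSpace E] {μ : Measure Ω} {ν : Measure E}
  {r : Ω → E} {s : Set E} {ψ : E → ℝ}

theorem ae_mem (hu : IsUniform r s μ ν) (hns : ν s ≠ 0) (hnt : ν s ≠ ⊤) (hs : MeasurableSet s) :
    ∀ᵐ ω ∂μ, r ω ∈ s := by
  change μ (r ⁻¹' sᶜ) = 0
  rw [← Measure.map_apply_of_aemeasurable (hu.aemeasurable hns hnt) hs.compl, hu,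
    cond_apply hs, Set.inter_compl_self, measure_empty, mul_zero]

theorem integrable_comp (hu : IsUniform r s μ ν) (hns : ν s ≠ 0) (hnt : ν s ≠ ⊤)
    (hψ : IntegrableOn ψ s ν) : Integrable (fun ω => ψ (r ω)) μ := by
  have hψ' : Integrable ψ (μ.map r) := by
    rw [hu]; exact hψ.smul_measure (ENNReal.inv_ne_top.mpr hns)
  exact (integrable_map_measure hψ'.aestronglyMeasurable (hu.aemeasurable hns hnt)).mp hψ'

theorem integral_comp (hu : IsUniform r s μ ν) (hns : ν s ≠ 0) (hnt : ν s ≠ ⊤)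
    (hψ : IntegrableOn ψ s ν) : ∫ ω, ψ (r ω) ∂μ = (ν s)⁻¹.toReal * ∫ u in s, ψ u ∂ν := by
  have hψ' : AEStronglyMeasurable ψ (μ.map r) := by
    rw [hu]; exact (hψ.smul_measure (ENNReal.inv_ne_top.mpr hns)).aestronglyMeasurable
  rw [← integral_map (hu.aemeasurable hns hnt) hψ', hu, ProbabilityTheory.cond,
    integral_smul_measure, smul_eq_mul]

theorem indepFun_comp {Y : Ω → ℝ} (hu : IsUniform r s μ ν) (hns : ν s ≠ 0) (hnt : ν s ≠ ⊤)
    (hψ : AEStronglyMeasurable ψ (ν.restrict s)) (hY : AEMeasurable Y μ) (hind : IndepFun r Y μ) :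
    IndepFun Y (fun ω => ψ (r ω)) μ := by
  have hψ' : AEMeasurable ψ (μ.map r) := by
    rw [hu]; exact (hψ.smul_measure _).aemeasurable
  exact (hind.comp₀ (hu.aemeasurable hns hnt) hY hψ' aemeasurable_id).symm

theorem integrable_mul_comp {Y : Ω → ℝ} (hu : IsUniform r s μ ν) (hns : ν s ≠ 0)
    (hnt : ν s ≠ ⊤) (hψ : IntegrableOn ψ s ν) (hY : Integrable Y μ) (hind : IndepFun r Y μ) :
    Integrable (fun ω => Y ω * ψ (r ω)) μ :=
  (hu.indepFun_comp hns hnt hψ.aestronglyMeasurable hY.aemeasurable hind).integrable_mul hY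
    (hu.integrable_comp hns hnt hψ)

theorem integral_mul_comp {Y : Ω → ℝ} (hu : IsUniform r s μ ν) (hns : ν s ≠ 0)
    (hnt : ν s ≠ ⊤) (hψ : IntegrableOn ψ s ν) (hY : AEStronglyMeasurable Y μ)
    (hind : IndepFun r Y μ) :
    ∫ ω, Y ω * ψ (r ω) ∂μ = (∫ ω, Y ω ∂μ) * ((ν s)⁻¹.toReal * ∫ u in s, ψ u ∂ν) := by
  rw [(hu.indepFun_comp hns hnt hψ.aestronglyMeasurable hY.aemeasurable hind
    ).integral_fun_mul_eq_mul_integral hY (hu.integrable_comp hns hnt hψ).aestronglyMeasurable,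
    hu.integral_comp hns hnt hψ]

end MeasureTheory.pdf.IsUniform

theorem kernel_gradient_estimator_second_moment_general (d : ℕ)
    (f : EuclideanSpace ℝ (Fin d) → ℝ) (Lbar : ℝ)
    (hdiff : Differentiable ℝ f)
    (hlip : ∀ x x' : EuclideanSpace ℝ (Fin d),
      ‖gradient f x - gradient f x'‖ ≤ Lbar * ‖x - x'‖)
    (Θ : Set (EuclideanSpace ℝ (Fin d))) (G : ℝ)
    (hG : ∀ y ∈ Θ, ‖gradient f y‖ ≤ G)
    (K : ℝ → ℝ) (hKint : IntegrableOn (fun u => K u ^ 2) (Set.Icc (-1 : ℝ) 1))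
    (κ : ℝ) (hκ : κ = ∫ u in Set.Icc (-1 : ℝ) 1, K u ^ 2)
    (Ω : Type*) [MeasureSpace Ω] [IsProbabilityMeasure (volume : Measure Ω)]
    (r : Ω → ℝ)
    (hrlaw : Measure.map r (volume : Measure Ω) =
      (volume (Set.Icc (-1 : ℝ) 1))⁻¹ • volume.restrict (Set.Icc (-1 : ℝ) 1))
    (σ : ℝ)
    (ξ ξ' : Fin d → Ω → ℝ)
    (hξmom : ∀ j, Integrable (fun ω => ξ j ω ^ 2) ∧ ∫ ω, ξ j ω ^ 2 ≤ σ ^ 2)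
    (hξ'mom : ∀ j, Integrable (fun ω => ξ' j ω ^ 2) ∧ ∫ ω, ξ' j ω ^ 2 ≤ σ ^ 2)
    (x : Ω → EuclideanSpace ℝ (Fin d)) (hxΘ : ∀ ω, x ω ∈ Θ)
    (hindep : IndepFun r
      (fun ω => (x ω, fun j => (ξ j ω, ξ' j ω))) (volume : Measure Ω))
    (h : ℝ) (hh : 0 < h)
    (g : Ω → EuclideanSpace ℝ (Fin d))
    (hg : ∀ ω j, g ω j = (1 / (2 * h)) *
      ((f (x ω + (h * r ω) • EuclideanSpace.single j (1 : ℝ)) + ξ j ω)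
        - (f (x ω - (h * r ω) • EuclideanSpace.single j (1 : ℝ)) + ξ' j ω)) * K (r ω)) :
    ∫ ω, ‖g ω‖ ^ 2 ≤
      3 * d * κ / 2 * (σ ^ 2 / h ^ 2 + 3 * Lbar ^ 2 / 4 * h ^ 2) + 9 * G ^ 2 * κ := by
  have hu : pdf.IsUniform r (Set.Icc (-1 : ℝ) 1) volume := hrlaw
  have hvol : volume (Set.Icc (-1 : ℝ) 1) = 2 := by
    rw [Real.volume_Icc]; norm_num
  have hns : volume (Set.Icc (-1 : ℝ) 1) ≠ 0 := by simp [hvol]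
  have hnt : volume (Set.Icc (-1 : ℝ) 1) ≠ ⊤ := by simp [hvol]
  have hhalf : (volume (Set.Icc (-1 : ℝ) 1))⁻¹.toReal * κ = κ / 2 := by
    rw [hvol, ENNReal.toReal_inv, ENNReal.toReal_ofNat]; ring
  have hκ0 : 0 ≤ κ := hκ ▸ setIntegral_nonneg measurableSet_Icc fun u _ => sq_nonneg (K u)
  set A := 9 / 2 * G ^ 2 + 9 / 4 * d * Lbar ^ 2 * h ^ 2 with hA
  set Z : Ω → ℝ := fun ω => A + 3 / (2 * h ^ 2) * ∑ j, (ξ j ω ^ 2 + ξ' j ω ^ 2)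
  have hnoise : ∀ j, Integrable fun ω => ξ j ω ^ 2 + ξ' j ω ^ 2 :=
    fun j => (hξmom j).1.add (hξ'mom j).1
  have hnoise_sum := integrable_finsetSum univ fun j _ => hnoise j
  have hZ : Integrable Z := (integrable_const A).add (hnoise_sum.const_mul _)
  have hZmean : ∫ ω, Z ω ≤ A + 3 / (2 * h ^ 2) * (d * (2 * σ ^ 2)) := by
    rw [integral_add (integrable_const A) (hnoise_sum.const_mul _), integral_const, probReal_univ,
      one_smul, integral_const_mul, integral_finsetSum _ fun j _ => hnoise j]
    gcongr
    refine (sum_le_sum (g := fun _ => 2 * σ ^ 2) fun j _ => ?_).trans_eq (by simp)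
    rw [integral_add (hξmom j).1 (hξ'mom j).1]
    linarith [(hξmom j).2, (hξ'mom j).2]
  have hZind : IndepFun r Z volume := hindep.comp measurable_id
    (by fun_prop : Measurable fun p : EuclideanSpace ℝ (Fin d) × (Fin d → ℝ × ℝ) =>
      A + 3 / (2 * h ^ 2) * ∑ j, ((p.2 j).1 ^ 2 + (p.2 j).2 ^ 2))
  have hpt : ∀ᵐ ω, ‖g ω‖ ^ 2 ≤ Z ω * K (r ω) ^ 2 := by
    filter_upwards [hu.ae_mem hns hnt measurableSet_Icc] with ω hω
    exact sq_norm_le_of_centralDifference hdiff hlip (hG _ (hxΘ ω)) hh (abs_le.mpr hω) _ _ (hg ω)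
  calc ∫ ω, ‖g ω‖ ^ 2 ≤ ∫ ω, Z ω * K (r ω) ^ 2 :=
        integral_mono_of_nonneg (ae_of_all _ fun ω => sq_nonneg _)
          (hu.integrable_mul_comp hns hnt hKint hZ hZind) hpt
    _ = (∫ ω, Z ω) * (κ / 2) := by
        rw [hu.integral_mul_comp hns hnt hKint hZ.aestronglyMeasurable hZind, ← hκ, hhalf]
    _ ≤ (A + 3 / (2 * h ^ 2) * (d * (2 * σ ^ 2))) * (κ / 2) := by gcongr
    _ ≤ 3 * d * κ / 2 * (σ ^ 2 / h ^ 2 + 3 * Lbar ^ 2 / 4 * h ^ 2) + 9 * G ^ 2 * κ := by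
        rw [hA]
        field_simp
        nlinarith [mul_nonneg (sq_nonneg G) hκ0]

/-- Second-moment bound for the kernel-based `2d`-point gradient estimator
(Lemma 2 of the paper): for a `2`-smooth `f` with gradient bounded by `G` on
`Θ`, kernel second moment `κ`, uniform direction `r` on `[-1,1]`, noise with
second moments bounded by `σ²`, and a `Θ`-valued random point `x` such that
`r` is independent of `(x, ξ, ξ')`, the estimator `g` satisfies
`𝔼‖g‖² ≤ (3dκ/2)(σ²/h² + 3L̄²h²/4) + 9G²κ`. -/
theorem kernel_gradient_estimator_second_moment (d : ℕ) (hd : 0 < d)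
    (f : EuclideanSpace ℝ (Fin d) → ℝ) (Lbar : ℝ)
    (hdiff : Differentiable ℝ f)
    (hlip : ∀ x x' : EuclideanSpace ℝ (Fin d),
      ‖gradient f x - gradient f x'‖ ≤ Lbar * ‖x - x'‖)
    (Θ : Set (EuclideanSpace ℝ (Fin d))) (G : ℝ)
    (hG : ∀ y ∈ Θ, ‖gradient f y‖ ≤ G)
    (K : ℝ → ℝ) (hKint : IntegrableOn (fun u => K u ^ 2) (Set.Icc (-1 : ℝ) 1))
    (κ : ℝ) (hκ : κ = ∫ u in Set.Icc (-1 : ℝ) 1, K u ^ 2)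
    (Ω : Type*) [MeasureSpace Ω] [IsProbabilityMeasure (volume : Measure Ω)]
    (r : Ω → ℝ) (hrmeas : Measurable r)
    (hrlaw : Measure.map r (volume : Measure Ω) =
      (volume (Set.Icc (-1 : ℝ) 1))⁻¹ • volume.restrict (Set.Icc (-1 : ℝ) 1))
    (σ : ℝ) (hσ : 0 ≤ σ)
    (ξ ξ' : Fin d → Ω → ℝ)
    (hξmom : ∀ j, Integrable (fun ω => ξ j ω ^ 2) ∧ ∫ ω, ξ j ω ^ 2 ≤ σ ^ 2)
    (hξ'mom : ∀ j, Integrable (fun ω => ξ' j ω ^ 2) ∧ ∫ ω, ξ' j ω ^ 2 ≤ σ ^ 2)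
    (x : Ω → EuclideanSpace ℝ (Fin d)) (hxΘ : ∀ ω, x ω ∈ Θ)
    (hindep : IndepFun r
      (fun ω => (x ω, fun j => (ξ j ω, ξ' j ω))) (volume : Measure Ω))
    (h : ℝ) (hh : 0 < h)
    (g : Ω → EuclideanSpace ℝ (Fin d))
    (hg : ∀ ω j, g ω j = (1 / (2 * h)) *
      ((f (x ω + (h * r ω) • EuclideanSpace.single j (1 : ℝ)) + ξ j ω)
        - (f (x ω - (h * r ω) • EuclideanSpace.single j (1 : ℝ)) + ξ' j ω)) * K (r ω)) :
    ∫ ω, ‖g ω‖ ^ 2 ≤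
      3 * d * κ / 2 * (σ ^ 2 / h ^ 2 + 3 * Lbar ^ 2 / 4 * h ^ 2) + 9 * G ^ 2 * κ :=
  kernel_gradient_estimator_second_moment_general d f Lbar hdiff hlip Θ G hG K hKint κ hκ Ω r hrlaw
    σ ξ ξ' hξmom hξ'mom x hxΘ hindep h hh g hg
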